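/- arXiv:1712.09749 — 5 statements merged into one kernel-verified Lean document; each statement's English description precedes it below -/
import Mathlib

section
/- Let $R$ be an axis-parallel rectangle of dimensions $\Delta \times \Delta'$ with $\Delta \le \Delta'$, and let $D$ be a closed disk of radius $\delta$ centered at a point of $R$. If $\delta \le \Delta$ then the area of $D \cap R$ is at least $\delta^2/9$; if $\Delta \le \delta \le \Delta'$ then the area of $D \cap R$ is at least $\delta\Delta/9$. -/
open MeasureTheory

lemma box_vol (a b u v : ℝ) :
    volume {p : EuclideanSpace ℝ (Fin 2) | p 0 ∈ Set.Icc a b ∧ p 1 ∈ Set.Icc u v}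
      = ENNReal.ofReal (b - a) * ENNReal.ofReal (v - u) := by
  have hmp := EuclideanSpace.volume_preserving_symm_measurableEquiv_toLp (Fin 2)
  set T : Set (Fin 2 → ℝ) :=
    Set.univ.pi (fun i => if i = 0 then Set.Icc a b else Set.Icc u v) with hT
  have hS : {p : EuclideanSpace ℝ (Fin 2) | p 0 ∈ Set.Icc a b ∧ p 1 ∈ Set.Icc u v}
      = (MeasurableEquiv.toLp 2 (Fin 2 → ℝ)).symm ⁻¹' T := by
    ext p
    simp only [hT, Set.mem_preimage, Set.mem_pi, Set.mem_univ, true_imp_iff,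
      Fin.forall_fin_two, MeasurableEquiv.coe_toLp_symm,
      Set.mem_setOf_eq]
    simp
  rw [hS, hmp.measure_preimage ((MeasurableSet.univ_pi fun i => by
        split <;> exact measurableSet_Icc).nullMeasurableSet)]
  rw [volume_pi_pi, Fin.prod_univ_two]
  simp [Real.volume_Icc]

lemma box_subset_ball (c : EuclideanSpace ℝ (Fin 2)) (δ s t a b : ℝ)
    (ha : 0 ≤ a) (hb : 0 ≤ b) (hab : a ^ 2 + b ^ 2 ≤ δ ^ 2) (hδ : 0 ≤ δ)
    (hcs : c 0 ∈ Set.Icc s (s + a)) (hct : c 1 ∈ Set.Icc t (t + b)) :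
    {p : EuclideanSpace ℝ (Fin 2) | p 0 ∈ Set.Icc s (s + a) ∧ p 1 ∈ Set.Icc t (t + b)}
      ⊆ Metric.closedBall c δ := by
  intro p hp
  obtain ⟨hp0, hp1⟩ := hp
  simp only [Set.mem_Icc] at hp0 hp1 hcs hct
  rw [Metric.mem_closedBall, EuclideanSpace.dist_eq, Fin.sum_univ_two]
  have h0 : dist (p 0) (c 0) ≤ a := by
    rw [Real.dist_eq, abs_le]
    constructor <;> [linarith [hp0.2, hcs.1]; linarith [hp0.1, hcs.2]]
  have h1 : dist (p 1) (c 1) ≤ b := by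
    rw [Real.dist_eq, abs_le]
    constructor <;> [linarith [hp1.2, hct.1]; linarith [hp1.1, hct.2]]
  calc Real.sqrt (dist (p 0) (c 0) ^ 2 + dist (p 1) (c 1) ^ 2)
      ≤ Real.sqrt (δ ^ 2) := by
        apply Real.sqrt_le_sqrt
        have := sq_le_sq' (by linarith [dist_nonneg (x := p 0) (y := c 0)]) h0
        have := sq_le_sq' (by linarith [dist_nonneg (x := p 1) (y := c 1)]) h1
        linarith
    _ = δ := Real.sqrt_sq hδ

/-- lower bounds on the area of the intersection of a disk of radius `δ`
centered in an axis-parallel `Δ × Δ'` rectangle with the rectangle. -/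
theorem stmt_1 (Δ Δ' δ x₀ y₀ : ℝ) (hΔ : 0 < Δ) (hΔΔ' : Δ ≤ Δ') (hδ : 0 < δ)
    (R : Set (EuclideanSpace ℝ (Fin 2)))
    (hR : R = {p : EuclideanSpace ℝ (Fin 2) |
      p 0 ∈ Set.Icc x₀ (x₀ + Δ) ∧ p 1 ∈ Set.Icc y₀ (y₀ + Δ')})
    (c : EuclideanSpace ℝ (Fin 2)) (hc : c ∈ R) :
    (δ ≤ Δ → ENNReal.ofReal (δ ^ 2 / 9) ≤ volume (Metric.closedBall c δ ∩ R)) ∧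
    (Δ ≤ δ → δ ≤ Δ' → ENNReal.ofReal (δ * Δ / 9) ≤ volume (Metric.closedBall c δ ∩ R)) := by
  have key : δ ≤ Δ' →
      ENNReal.ofReal (min δ Δ / 2 * (δ / 2)) ≤ volume (Metric.closedBall c δ ∩ R) := by
    intro hδΔ'
    subst hR
    obtain ⟨hc0, hc1⟩ := hc
    simp only [Set.mem_Icc] at hc0 hc1
    set a := min δ Δ / 2 with hadef
    set b := δ / 2 with hbdef
    have ha : 0 ≤ a := div_nonneg (le_min hδ.le hΔ.le) (by norm_num)
    have hb : 0 ≤ b := by rw [hbdef]; linarith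
    have haΔ : a ≤ Δ / 2 := by rw [hadef]; linarith [min_le_right δ Δ]
    have haδ : a ≤ δ / 2 := by rw [hadef]; linarith [min_le_left δ Δ]
    have hab : a ^ 2 + b ^ 2 ≤ δ ^ 2 := by rw [hbdef]; nlinarith
    have hs : ∃ s, x₀ ≤ s ∧ s + a ≤ x₀ + Δ ∧ s ≤ c 0 ∧ c 0 ≤ s + a := by
      rcases le_or_gt (c 0) (x₀ + Δ / 2) with h | h
      · exact ⟨c 0, hc0.1, by linarith, le_refl _, by linarith⟩
      · exact ⟨c 0 - a, by linarith, by linarith [hc0.2], by linarith, by linarith⟩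
    have ht : ∃ t, y₀ ≤ t ∧ t + b ≤ y₀ + Δ' ∧ t ≤ c 1 ∧ c 1 ≤ t + b := by
      rcases le_or_gt (c 1) (y₀ + Δ' / 2) with h | h
      · exact ⟨c 1, hc1.1, by rw [hbdef]; linarith, le_refl _, by linarith⟩
      · exact ⟨c 1 - b, by rw [hbdef]; linarith, by linarith [hc1.2], by linarith, by linarith⟩
    obtain ⟨s, hs1, hs2, hs3, hs4⟩ := hs
    obtain ⟨t, ht1, ht2, ht3, ht4⟩ := ht
    have hball := box_subset_ball c δ s t a b ha hb hab hδ.le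
      (Set.mem_Icc.mpr ⟨hs3, hs4⟩) (Set.mem_Icc.mpr ⟨ht3, ht4⟩)
    have hsubR : {p : EuclideanSpace ℝ (Fin 2) |
        p 0 ∈ Set.Icc s (s + a) ∧ p 1 ∈ Set.Icc t (t + b)} ⊆
        {p : EuclideanSpace ℝ (Fin 2) |
        p 0 ∈ Set.Icc x₀ (x₀ + Δ) ∧ p 1 ∈ Set.Icc y₀ (y₀ + Δ')} := by
      intro p hp
      obtain ⟨h1, h2⟩ := hp
      simp only [Set.mem_Icc] at h1 h2
      exact ⟨Set.mem_Icc.mpr ⟨by linarith, by linarith⟩,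
        Set.mem_Icc.mpr ⟨by linarith, by linarith⟩⟩
    calc ENNReal.ofReal (a * b)
        = volume {p : EuclideanSpace ℝ (Fin 2) |
            p 0 ∈ Set.Icc s (s + a) ∧ p 1 ∈ Set.Icc t (t + b)} := by
          rw [box_vol, ← ENNReal.ofReal_mul (by linarith : (0:ℝ) ≤ s + a - s)]
          congr 1; ring
      _ ≤ volume (Metric.closedBall c δ ∩ _) :=
          measure_mono (Set.subset_inter hball hsubR)
  constructor
  · intro h
    refine le_trans (ENNReal.ofReal_le_ofReal ?_) (key (h.trans hΔΔ'))
    rw [min_eq_left h]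
    nlinarith [sq_nonneg δ]
  · intro h1 h2
    refine le_trans (ENNReal.ofReal_le_ofReal ?_) (key h2)
    rw [min_eq_right h1]
    nlinarith [mul_nonneg hδ.le hΔ.le]
end

section
/- Let $R = [0,\Delta] \times [0,\Delta']$ with $\Delta \le \Delta'$, and let $a_1,\dots,a_m$ be independent uniformly random points in $R$ with $m \ge 2$. Set $\delta_1 = \Delta'/(2m^2)$. Then the probability that the closest-pair distance $\kappa(\{a_1,\dots,a_m\})$ is at most $\delta_1$ is less than $1/2$; consequently $\mathbb{E}[\kappa^p] \ge \delta_1^p/2$ for every constant $p \ge 1$. -/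
open MeasureTheory ProbabilityTheory

private lemma vol_box (a b c d : ℝ) :
    volume {x : EuclideanSpace ℝ (Fin 2) | x 0 ∈ Set.Icc a b ∧ x 1 ∈ Set.Icc c d}
      = ENNReal.ofReal (b - a) * ENNReal.ofReal (d - c) := by
  have hset : {x : EuclideanSpace ℝ (Fin 2) | x 0 ∈ Set.Icc a b ∧ x 1 ∈ Set.Icc c d}
      = ((MeasurableEquiv.toLp 2 (Fin 2 → ℝ)).symm) ⁻¹'
        (Set.univ.pi fun i : Fin 2 => Set.Icc (![a,c] i) (![b,d] i)) := by
    ext x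
    simp only [Set.mem_setOf_eq, Set.mem_preimage, Set.mem_pi, Set.mem_univ, forall_true_left,
      Fin.forall_fin_two, Set.mem_Icc]
    exact Iff.rfl
  rw [hset, ((EuclideanSpace.volume_preserving_symm_measurableEquiv_toLp (Fin 2)).measure_preimage
    ((MeasurableSet.univ_pi fun i => measurableSet_Icc).nullMeasurableSet))]
  rw [volume_pi_pi, Fin.prod_univ_two]
  simp [Real.volume_Icc]

private lemma meas_coord (i : Fin 2) : Measurable fun x : EuclideanSpace ℝ (Fin 2) => x i :=
  (measurable_pi_apply i).comp ((MeasurableEquiv.toLp 2 (Fin 2 → ℝ)).symm).measurable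

private lemma coord_dist_le (x y : EuclideanSpace ℝ (Fin 2)) (i : Fin 2) :
    dist (x i) (y i) ≤ dist x y := by
  rw [EuclideanSpace.dist_eq]
  have h1 : dist (x i) (y i) = Real.sqrt (dist (x i) (y i) ^ 2) := by
    rw [Real.sqrt_sq dist_nonneg]
  rw [h1]
  apply Real.sqrt_le_sqrt
  exact Finset.single_le_sum (f := fun j => dist (x j) (y j) ^ 2)
    (fun j _ => sq_nonneg _) (Finset.mem_univ i)

private lemma dist_le_sum_coord (x y : EuclideanSpace ℝ (Fin 2)) :
    dist x y ≤ dist (x 0) (y 0) + dist (x 1) (y 1) := by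
  rw [EuclideanSpace.dist_eq, Fin.sum_univ_two]
  have h : dist (x 0) (y 0) ^ 2 + dist (x 1) (y 1) ^ 2
      ≤ (dist (x 0) (y 0) + dist (x 1) (y 1)) ^ 2 := by
    nlinarith [dist_nonneg (x := x 0) (y := y 0), dist_nonneg (x := x 1) (y := y 1)]
  calc Real.sqrt _ ≤ Real.sqrt ((dist (x 0) (y 0) + dist (x 1) (y 1)) ^ 2) := Real.sqrt_le_sqrt h
    _ = _ := Real.sqrt_sq (by positivity)

private lemma meas_inf' {Ω : Type*} [MeasurableSpace Ω] {ι : Type*} (s : Finset ι)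
    (hs : s.Nonempty) (f : ι → Ω → ℝ) (hf : ∀ i, Measurable (f i)) :
    Measurable fun ω => s.inf' hs fun i => f i ω := by
  induction hs using Finset.Nonempty.cons_induction with
  | singleton i => simpa using hf i
  | cons i s his hs ih =>
      have heq : (fun ω => (Finset.cons i s his).inf' (Finset.cons_nonempty his) fun j => f j ω)
          = fun ω => min (f i ω) (s.inf' hs fun j => f j ω) := by
        funext ω
        rw [Finset.inf'_cons]
      rw [heq]
      exact (hf i).min ih

private lemma card_lt_pairs (m : ℕ) :
    (Finset.univ.filter fun p : Fin m × Fin m => p.1 < p.2).card * 2 + m = m * m := by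
  classical
  have hswap : (Finset.univ.filter fun p : Fin m × Fin m => p.1 < p.2).card
      = (Finset.univ.filter fun p : Fin m × Fin m => p.2 < p.1).card := by
    apply Finset.card_nbij' (i := Prod.swap) (j := Prod.swap) <;> simp [Finset.mem_filter, Set.MapsTo, Set.LeftInvOn, Set.RightInvOn]
  have hdiag : (Finset.univ.filter fun p : Fin m × Fin m => p.1 = p.2).card = m := by
    rw [Finset.card_filter, Fintype.sum_prod_type]
    simp
  have hsplit := Finset.card_filter_add_card_filter_not
    (s := (Finset.univ : Finset (Fin m × Fin m))) (p := fun p => p.1 < p.2)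
  have hneg : (Finset.univ.filter fun p : Fin m × Fin m => ¬ p.1 < p.2)
      = (Finset.univ.filter fun p : Fin m × Fin m => p.2 < p.1)
        ∪ (Finset.univ.filter fun p : Fin m × Fin m => p.1 = p.2) := by
    ext p
    simp only [Finset.mem_filter, Finset.mem_univ, true_and, Finset.mem_union, not_lt]
    rw [le_iff_lt_or_eq]
    tauto
  have hdisj : Disjoint (Finset.univ.filter fun p : Fin m × Fin m => p.2 < p.1)
      (Finset.univ.filter fun p : Fin m × Fin m => p.1 = p.2) := by
    rw [Finset.disjoint_left]
    intro p hp1 hp2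
    simp only [Finset.mem_filter] at hp1 hp2
    exact absurd hp2.2 (ne_of_lt hp1.2).symm
  have hcard := Finset.card_union_of_disjoint hdisj
  rw [hneg, hcard, hdiag, ← hswap] at hsplit
  simp only [Finset.card_univ, Fintype.card_prod, Fintype.card_fin] at hsplit
  omega

/-- for `m ≥ 2` i.i.d. uniform points in `[0,Δ] × [0,Δ']` with `Δ ≤ Δ'`,
setting `δ₁ = Δ'/(2m²)`, the probability that the closest-pair distance is at most `δ₁`
is less than `1/2`; consequently `E[κ^p] ≥ δ₁^p / 2` for every `p ≥ 1`. -/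
theorem stmt_2 (Δ Δ' : ℝ) (hΔ : 0 < Δ) (hΔΔ' : Δ ≤ Δ') (m : ℕ) (hm : 2 ≤ m)
    (R : Set (EuclideanSpace ℝ (Fin 2)))
    (hR : R = {p : EuclideanSpace ℝ (Fin 2) |
      p 0 ∈ Set.Icc 0 Δ ∧ p 1 ∈ Set.Icc 0 Δ'})
    (Ω : Type*) [MeasureSpace Ω] [IsProbabilityMeasure (ℙ : Measure Ω)]
    (a : Fin m → Ω → EuclideanSpace ℝ (Fin 2))
    (hmeas : ∀ i, Measurable (a i))
    (hindep : iIndepFun a ℙ)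
    (hunif : ∀ i, Measure.map (a i) ℙ = (volume R)⁻¹ • volume.restrict R)
    (κ : Ω → ℝ)
    (hκ : ∀ ω, κ ω = sInf {d : ℝ | ∃ i j : Fin m, i ≠ j ∧ d = dist (a i ω) (a j ω)})
    (δ₁ : ℝ) (hδ₁ : δ₁ = Δ' / (2 * (m : ℝ) ^ 2)) :
    ℙ {ω | κ ω ≤ δ₁} < 1 / 2 ∧
    ∀ p : ℝ, 1 ≤ p → δ₁ ^ p / 2 ≤ ∫ ω, κ ω ^ p ∂ℙ := by
  have hmpos : 0 < m := by omega
  have hmR : (0:ℝ) < m := by exact_mod_cast hmpos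
  have hΔ' : (0:ℝ) < Δ' := lt_of_lt_of_le hΔ hΔΔ'
  have hδ₁pos : 0 < δ₁ := by rw [hδ₁]; positivity
  have hproj0 : Measurable fun x : EuclideanSpace ℝ (Fin 2) => x 0 := meas_coord 0
  have hproj1 : Measurable fun x : EuclideanSpace ℝ (Fin 2) => x 1 := meas_coord 1
  have hRmeas : MeasurableSet R := by
    rw [hR]
    exact (hproj0 measurableSet_Icc).inter (hproj1 measurableSet_Icc)
  have hvolR : volume R = ENNReal.ofReal Δ * ENNReal.ofReal Δ' := by
    rw [hR]
    simpa using vol_box 0 Δ 0 Δ'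
  set μ : Measure (EuclideanSpace ℝ (Fin 2)) := (volume R)⁻¹ • volume.restrict R with hμdef
  have i₀ : Fin m := ⟨0, by omega⟩
  have hμprob : IsProbabilityMeasure μ := by
    rw [← hunif ⟨0, by omega⟩]
    exact Measure.isProbabilityMeasure_map (hmeas _).aemeasurable
  -- strip bound
  have halg : (ENNReal.ofReal Δ * ENNReal.ofReal Δ')⁻¹ * (ENNReal.ofReal Δ * ENNReal.ofReal (2*δ₁))
      = ENNReal.ofReal (2*δ₁/Δ') := by
    rw [← ENNReal.ofReal_mul hΔ.le, ← ENNReal.ofReal_mul hΔ.le,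
      ← ENNReal.ofReal_inv_of_pos (by positivity), ← ENNReal.ofReal_mul (by positivity)]
    congr 1
    field_simp
  have hstrip : ∀ c : ℝ, μ {y : EuclideanSpace ℝ (Fin 2) | dist (y 1) c ≤ δ₁}
      ≤ ENNReal.ofReal (2*δ₁/Δ') := by
    intro c
    have hsmeas : MeasurableSet {y : EuclideanSpace ℝ (Fin 2) | dist (y 1) c ≤ δ₁} :=
      measurableSet_le (hproj1.dist measurable_const) measurable_const
    have hsub : {y : EuclideanSpace ℝ (Fin 2) | dist (y 1) c ≤ δ₁} ∩ R
        ⊆ {y : EuclideanSpace ℝ (Fin 2) | y 0 ∈ Set.Icc 0 Δ ∧ y 1 ∈ Set.Icc (c-δ₁) (c+δ₁)} := by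
      rw [hR]
      rintro y ⟨h2, h0, h1⟩
      refine ⟨h0, ?_⟩
      simp only [Set.mem_setOf_eq] at h2
      rw [Real.dist_eq, abs_le] at h2
      constructor <;> [linarith [h2.2]; linarith [h2.1]]
    have hle : μ {y : EuclideanSpace ℝ (Fin 2) | dist (y 1) c ≤ δ₁}
        ≤ (volume R)⁻¹ * (ENNReal.ofReal Δ * ENNReal.ofReal (2*δ₁)) := by
      rw [hμdef, Measure.smul_apply, smul_eq_mul, Measure.restrict_apply hsmeas]
      apply mul_le_mul_right
      calc volume _ ≤ volume {y : EuclideanSpace ℝ (Fin 2) |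
            y 0 ∈ Set.Icc 0 Δ ∧ y 1 ∈ Set.Icc (c-δ₁) (c+δ₁)} := measure_mono hsub
        _ = ENNReal.ofReal Δ * ENNReal.ofReal (2*δ₁) := by
            rw [vol_box]
            congr 1 <;> [skip; congr 1] <;> ring
    calc μ _ ≤ _ := hle
      _ = ENNReal.ofReal (2*δ₁/Δ') := by rw [hvolR, halg]
  -- pair bound
  have hpair : ∀ i j : Fin m, i ≠ j →
      ℙ {ω | dist (a i ω) (a j ω) ≤ δ₁} ≤ ENNReal.ofReal (2*δ₁/Δ') := by
    intro i j hij
    have hmap : Measure.map (fun ω => (a i ω, a j ω)) ℙ = μ.prod μ := by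
      rw [(indepFun_iff_map_prod_eq_prod_map_map (hmeas i).aemeasurable
        (hmeas j).aemeasurable).mp (hindep.indepFun hij), hunif i, hunif j]
    have hSmeas : MeasurableSet {p : EuclideanSpace ℝ (Fin 2) × EuclideanSpace ℝ (Fin 2) |
        dist p.1 p.2 ≤ δ₁} := measurableSet_le measurable_dist measurable_const
    have heq : ℙ {ω | dist (a i ω) (a j ω) ≤ δ₁}
        = (μ.prod μ) {p : EuclideanSpace ℝ (Fin 2) × EuclideanSpace ℝ (Fin 2) |
            dist p.1 p.2 ≤ δ₁} := by
      rw [← hmap, Measure.map_apply ((hmeas i).prodMk (hmeas j)) hSmeas]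
      rfl
    rw [heq]
    have hsub : {p : EuclideanSpace ℝ (Fin 2) × EuclideanSpace ℝ (Fin 2) | dist p.1 p.2 ≤ δ₁}
        ⊆ {p : EuclideanSpace ℝ (Fin 2) × EuclideanSpace ℝ (Fin 2) |
            dist (p.1 1) (p.2 1) ≤ δ₁} :=
      fun p hp => le_trans (coord_dist_le _ _ 1) hp
    have hmeasset : MeasurableSet {p : EuclideanSpace ℝ (Fin 2) × EuclideanSpace ℝ (Fin 2) |
        dist (p.1 1) (p.2 1) ≤ δ₁} :=
      measurableSet_le ((hproj1.comp measurable_fst).dist (hproj1.comp measurable_snd))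
        measurable_const
    refine le_trans (measure_mono hsub) ?_
    rw [Measure.prod_apply hmeasset]
    have hslice : ∀ x : EuclideanSpace ℝ (Fin 2),
        μ (Prod.mk x ⁻¹' {p : EuclideanSpace ℝ (Fin 2) × EuclideanSpace ℝ (Fin 2) |
          dist (p.1 1) (p.2 1) ≤ δ₁}) ≤ ENNReal.ofReal (2*δ₁/Δ') := by
      intro x
      have : Prod.mk x ⁻¹' {p : EuclideanSpace ℝ (Fin 2) × EuclideanSpace ℝ (Fin 2) |
          dist (p.1 1) (p.2 1) ≤ δ₁} = {y : EuclideanSpace ℝ (Fin 2) | dist (y 1) (x 1) ≤ δ₁} := by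
        ext y
        simp [dist_comm]
      rw [this]
      exact hstrip (x 1)
    calc ∫⁻ x, μ (Prod.mk x ⁻¹' _) ∂μ ≤ ∫⁻ _, ENNReal.ofReal (2*δ₁/Δ') ∂μ :=
          lintegral_mono hslice
      _ = ENNReal.ofReal (2*δ₁/Δ') := by simp
  -- union bound
  classical
  set s₁ := Finset.univ.filter (fun p : Fin m × Fin m => p.1 < p.2) with hs₁def
  have hne01 : (⟨0, by omega⟩ : Fin m) ≠ ⟨1, by omega⟩ := by
    simp [Fin.ext_iff]
  have hsub : {ω | κ ω ≤ δ₁} ⊆ ⋃ p ∈ s₁, {ω | dist (a p.1 ω) (a p.2 ω) ≤ δ₁} := by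
    intro ω hω
    simp only [Set.mem_setOf_eq] at hω
    set D := {d : ℝ | ∃ i j : Fin m, i ≠ j ∧ d = dist (a i ω) (a j ω)} with hDdef
    have hDim : D = (fun p : Fin m × Fin m => dist (a p.1 ω) (a p.2 ω)) '' {p | p.1 ≠ p.2} := by
      ext d
      constructor
      · rintro ⟨i, j, hij, rfl⟩
        exact ⟨(i, j), hij, rfl⟩
      · rintro ⟨p, hp, rfl⟩
        exact ⟨p.1, p.2, hp, rfl⟩
    have hfin : D.Finite := by
      rw [hDim]
      exact (Set.toFinite _).image _
    have hDne : D.Nonempty :=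
      ⟨_, ⟨⟨0, by omega⟩, ⟨1, by omega⟩, hne01, rfl⟩⟩
    have hmem : sInf D ∈ D := hDne.csInf_mem hfin
    rw [hκ ω] at hω
    obtain ⟨i, j, hij, hd⟩ := hmem
    rcases hij.lt_or_gt with h | h
    · refine Set.mem_biUnion (show (i, j) ∈ s₁ by simp [hs₁def, h]) ?_
      simp only [Set.mem_setOf_eq]
      rw [← hd]
      exact hω
    · refine Set.mem_biUnion (show (j, i) ∈ s₁ by simp [hs₁def, h]) ?_
      simp only [Set.mem_setOf_eq]
      rw [dist_comm, ← hd]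
      exact hω
  have hcard2 : s₁.card * 2 + m = m * m := card_lt_pairs m
  have hmainlt : ℙ {ω | κ ω ≤ δ₁} < 1 / 2 := by
    have h1 : ℙ {ω | κ ω ≤ δ₁} ≤ ∑ p ∈ s₁, ℙ {ω | dist (a p.1 ω) (a p.2 ω) ≤ δ₁} :=
      le_trans (measure_mono hsub) (measure_biUnion_finset_le _ _)
    have h2 : ∑ p ∈ s₁, ℙ {ω | dist (a p.1 ω) (a p.2 ω) ≤ δ₁}
        ≤ s₁.card • ENNReal.ofReal (2*δ₁/Δ') := by
      apply Finset.sum_le_card_nsmul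
      intro p hp
      have hplt : p.1 < p.2 := by
        simp only [hs₁def, Finset.mem_filter] at hp
        exact hp.2
      exact hpair p.1 p.2 (ne_of_lt hplt)
    have h3 : s₁.card • ENNReal.ofReal (2*δ₁/Δ')
        = ENNReal.ofReal ((s₁.card : ℝ) * (2*δ₁/Δ')) := by
      rw [nsmul_eq_mul, ENNReal.ofReal_mul (by positivity), ENNReal.ofReal_natCast]
    have hreal : (s₁.card : ℝ) * (2*δ₁/Δ') < 1/2 := by
      have hc : (s₁.card : ℝ) * 2 + m = m * m := by exact_mod_cast hcard2
      have key : (2:ℝ) * (Δ' / (2 * (m:ℝ)^2)) / Δ' = 1 / (m:ℝ)^2 := by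
        field_simp
      rw [hδ₁, key, mul_one_div, div_lt_iff₀ (by positivity)]
      nlinarith [hc, hmR]
    calc ℙ {ω | κ ω ≤ δ₁} ≤ _ := h1
      _ ≤ s₁.card • ENNReal.ofReal (2*δ₁/Δ') := h2
      _ = ENNReal.ofReal ((s₁.card : ℝ) * (2*δ₁/Δ')) := h3
      _ < 1/2 := by
          have : (1/2 : ENNReal) = ENNReal.ofReal (1/2) := by
            rw [ENNReal.ofReal_div_of_pos (by norm_num)]
            simp
          rw [this]
          exact ENNReal.ofReal_lt_ofReal_iff (by norm_num) |>.mpr hreal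
  refine ⟨hmainlt, ?_⟩
  -- second part
  set s' := Finset.univ.filter (fun p : Fin m × Fin m => p.1 ≠ p.2) with hs'def
  have hs'ne : s'.Nonempty := ⟨(⟨0, by omega⟩, ⟨1, by omega⟩), by simp [hs'def, hne01]⟩
  have hκeq : κ = fun ω => s'.inf' hs'ne fun p => dist (a p.1 ω) (a p.2 ω) := by
    funext ω
    rw [hκ, Finset.inf'_eq_csInf_image]
    congr 1
    ext d
    simp only [Set.mem_setOf_eq, Set.mem_image, Finset.mem_coe, Finset.mem_filter,
      Finset.mem_univ, true_and, hs'def]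
    constructor
    · rintro ⟨i, j, hij, rfl⟩
      exact ⟨(i, j), hij, rfl⟩
    · rintro ⟨p, hp, rfl⟩
      exact ⟨p.1, p.2, hp, rfl⟩
  have hκmeas : Measurable κ := by
    rw [hκeq]
    exact meas_inf' s' hs'ne _ (fun p => (hmeas p.1).dist (hmeas p.2))
  have hκnonneg : ∀ ω, 0 ≤ κ ω := by
    intro ω
    rw [hκ]
    apply Real.sInf_nonneg
    rintro d ⟨i, j, _, rfl⟩
    exact dist_nonneg
  have haein : ∀ᵐ ω, ∀ i, a i ω ∈ R := by
    rw [MeasureTheory.ae_all_iff]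
    intro i
    rw [ae_iff]
    have hpre : {ω | ¬ a i ω ∈ R} = a i ⁻¹' Rᶜ := rfl
    rw [hpre, ← Measure.map_apply (hmeas i) hRmeas.compl, hunif i,
      Measure.smul_apply, Measure.restrict_apply hRmeas.compl]
    simp
  have hbound : ∀ᵐ ω, κ ω ≤ Δ + Δ' := by
    filter_upwards [haein] with ω hω
    have h1 : κ ω ≤ dist (a ⟨0, by omega⟩ ω) (a ⟨1, by omega⟩ ω) := by
      rw [hκ]
      apply csInf_le
      · exact ⟨0, by rintro d ⟨i, j, _, rfl⟩; exact dist_nonneg⟩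
      · exact ⟨⟨0, by omega⟩, ⟨1, by omega⟩, hne01, rfl⟩
    refine le_trans h1 (le_trans (dist_le_sum_coord _ _) ?_)
    have h0 := hω ⟨0, by omega⟩
    have h1' := hω ⟨1, by omega⟩
    rw [hR] at h0 h1'
    obtain ⟨⟨ha0, ha0'⟩, ha1, ha1'⟩ := h0
    obtain ⟨⟨hb0, hb0'⟩, hb1, hb1'⟩ := h1'
    have d0 : dist (a ⟨0, by omega⟩ ω 0) (a ⟨1, by omega⟩ ω 0) ≤ Δ := by
      rw [Real.dist_eq, abs_le]
      constructor <;> linarith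
    have d1 : dist (a ⟨0, by omega⟩ ω 1) (a ⟨1, by omega⟩ ω 1) ≤ Δ' := by
      rw [Real.dist_eq, abs_le]
      constructor <;> linarith
    linarith
  intro p hp
  have hp0 : (0:ℝ) ≤ p := le_trans zero_le_one hp
  have hintg : Integrable (fun ω => κ ω ^ p) ℙ := by
    apply Integrable.mono' (integrable_const ((Δ + Δ') ^ p))
    · exact ((Real.continuous_rpow_const hp0).measurable.comp hκmeas).aestronglyMeasurable
    · filter_upwards [hbound] with ω hb
      rw [Real.norm_eq_abs, abs_of_nonneg (Real.rpow_nonneg (hκnonneg ω) p)]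
      exact Real.rpow_le_rpow (hκnonneg ω) hb hp0
  set T := {ω | κ ω ≤ δ₁} with hTdef
  have hTmeas : MeasurableSet T := measurableSet_le hκmeas measurable_const
  have hTc : (1/2 : ENNReal) ≤ ℙ Tᶜ := by
    rw [measure_compl hTmeas (measure_ne_top _ _), measure_univ]
    have h12 : (1:ENNReal) - 1/2 = 1/2 := by
      rw [ENNReal.sub_half (by norm_num)]
    calc (1/2 : ENNReal) = 1 - 1/2 := h12.symm
      _ ≤ 1 - ℙ T := tsub_le_tsub_left hmainlt.le 1
  have hTcreal : (1/2 : ℝ) ≤ (ℙ Tᶜ).toReal := by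
    have h := ENNReal.toReal_mono (measure_ne_top _ _) hTc
    simpa using h
  have hind : ∀ ω, Tᶜ.indicator (fun _ => δ₁ ^ p) ω ≤ κ ω ^ p := by
    intro ω
    by_cases hω : ω ∈ Tᶜ
    · rw [Set.indicator_of_mem hω]
      have hκω : δ₁ ≤ κ ω := by
        have := (Set.mem_compl_iff _ _).mp hω
        simp only [hTdef, Set.mem_setOf_eq, not_le] at this
        exact this.le
      exact Real.rpow_le_rpow hδ₁pos.le hκω hp0
    · rw [Set.indicator_of_notMem hω]
      exact Real.rpow_nonneg (hκnonneg ω) p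
  have hintind : Integrable (Tᶜ.indicator fun _ => δ₁ ^ p) ℙ :=
    (integrable_const _).indicator hTmeas.compl
  have hinteq : ∫ ω, Tᶜ.indicator (fun _ => δ₁ ^ p) ω ∂ℙ = (ℙ Tᶜ).toReal • δ₁ ^ p :=
    integral_indicator_const _ hTmeas.compl
  have hmono : ∫ ω, Tᶜ.indicator (fun _ => δ₁ ^ p) ω ∂ℙ ≤ ∫ ω, κ ω ^ p ∂ℙ :=
    integral_mono hintind hintg hind
  have hδp : (0:ℝ) ≤ δ₁ ^ p := Real.rpow_nonneg hδ₁pos.le p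
  calc δ₁ ^ p / 2 = (1/2) * δ₁ ^ p := by ring
    _ ≤ (ℙ Tᶜ).toReal * δ₁ ^ p := mul_le_mul_of_nonneg_right hTcreal hδp
    _ = ∫ ω, Tᶜ.indicator (fun _ => δ₁ ^ p) ω ∂ℙ := by rw [hinteq, smul_eq_mul]
    _ ≤ _ := hmono
end

section
/- Let $y_1,\dots,y_m$ (with $m \ge 2$) be exchangeable real random variables that are almost surely pairwise distinct. Fix a distinguished index $j$ and another index $i \ne j$. Then the probability that $y_j$ is adjacent to $y_i$ in the sorted order of $y_1,\dots,y_m$ (i.e., no $y_k$ with $k \ne i,j$ lies strictly between $y_i$ and $y_j$) is at most $2/(m-1)$. -/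
open MeasureTheory ProbabilityTheory

open Classical

/-- uniqueness of successor -/
lemma succ_unique {m : ℕ} (f : Fin m → ℝ) (hf : Function.Injective f)
    {s t t' : Fin m} (h1 : f s < f t) (h2 : f s < f t')
    (a1 : ∀ k, k ≠ s → k ≠ t → f k ∉ Set.Ioo (min (f s) (f t)) (max (f s) (f t)))
    (a2 : ∀ k, k ≠ s → k ≠ t' → f k ∉ Set.Ioo (min (f s) (f t')) (max (f s) (f t'))) :
    t = t' := by
  by_contra hne
  have hts : t ≠ s := fun h => by subst h; exact lt_irrefl _ h1
  have ht's : t' ≠ s := fun h => by subst h; exact lt_irrefl _ h2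
  have A := a1 t' ht's (Ne.symm hne)
  have B := a2 t hts hne
  rw [min_eq_left h1.le, max_eq_right h1.le] at A
  rw [min_eq_left h2.le, max_eq_right h2.le] at B
  simp only [Set.mem_Ioo, not_and, not_lt] at A B
  have hAt : f t ≤ f t' := A h2
  have hBt : f t' ≤ f t := B h1
  exact hne (hf (le_antisymm hAt hBt))

lemma adj_card_le (m : ℕ) (f : Fin m → ℝ) (hf : Function.Injective f) :
    (Finset.univ.filter (fun p : Fin m × Fin m => p.1 ≠ p.2 ∧
      ∀ k, k ≠ p.1 → k ≠ p.2 →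
        f k ∉ Set.Ioo (min (f p.1) (f p.2)) (max (f p.1) (f p.2)))).card ≤ 2 * (m - 1) := by
  rcases Nat.eq_zero_or_pos m with hm | hm
  · subst hm
    simp
  obtain ⟨M, -, hM⟩ := Finset.exists_max_image (Finset.univ : Finset (Fin m)) f ⟨⟨0, hm⟩, Finset.mem_univ _⟩
  set P := (Finset.univ.filter (fun p : Fin m × Fin m => p.1 ≠ p.2 ∧
      ∀ k, k ≠ p.1 → k ≠ p.2 →
        f k ∉ Set.Ioo (min (f p.1) (f p.2)) (max (f p.1) (f p.2)))) with hP
  have hcard : P.card ≤ ((Finset.univ.erase M) ×ˢ (Finset.univ : Finset Bool)).card := by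
    apply Finset.card_le_card_of_injOn
      (fun p => if f p.1 < f p.2 then (p.1, true) else (p.2, false))
    · intro p hp
      replace hp : p ∈ P := hp
      simp only [hP, Finset.mem_filter] at hp
      obtain ⟨-, hne, hadj⟩ := hp
      have hlt : f p.1 ≠ f p.2 := fun h => hne (hf h)
      rcases lt_or_gt_of_ne hlt with h | h
      · simp only [if_pos h, Finset.mem_coe, Finset.mem_product, Finset.mem_univ, and_true]
        apply Finset.mem_erase.2
        refine ⟨fun hEq => ?_, Finset.mem_univ _⟩
        subst hEq
        exact absurd (hM p.2 (Finset.mem_univ _)) (not_le.2 h)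
      · simp only [if_neg (not_lt.2 h.le), Finset.mem_coe, Finset.mem_product, Finset.mem_univ, and_true]
        apply Finset.mem_erase.2
        refine ⟨fun hEq => ?_, Finset.mem_univ _⟩
        subst hEq
        exact absurd (hM p.1 (Finset.mem_univ _)) (not_le.2 h)
    · intro p hp q hq hpq
      simp only [hP, Finset.coe_filter, Set.mem_setOf_eq] at hp hq
      obtain ⟨-, hnp, hap⟩ := hp
      obtain ⟨-, hnq, haq⟩ := hq
      have hltp : f p.1 ≠ f p.2 := fun h => hnp (hf h)
      have hltq : f q.1 ≠ f q.2 := fun h => hnq (hf h)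
      rcases lt_or_gt_of_ne hltp with h1 | h1 <;> rcases lt_or_gt_of_ne hltq with h2 | h2
      · simp only [if_pos h1, if_pos h2, Prod.mk.injEq] at hpq
        obtain ⟨e1, -⟩ := hpq
        have e2 : p.2 = q.2 := by
          apply succ_unique f hf (s := p.1) h1 (e1 ▸ h2) hap
          rw [e1]; exact haq
        exact Prod.ext e1 e2
      · simp only [if_pos h1, if_neg (not_lt.2 h2.le), Prod.mk.injEq] at hpq
        exact absurd hpq.2 (by simp)
      · simp only [if_neg (not_lt.2 h1.le), if_pos h2, Prod.mk.injEq] at hpq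
        exact absurd hpq.2 (by simp)
      · simp only [if_neg (not_lt.2 h1.le), if_neg (not_lt.2 h2.le), Prod.mk.injEq] at hpq
        obtain ⟨e1, -⟩ := hpq
        have hap' : ∀ k, k ≠ p.2 → k ≠ p.1 →
            f k ∉ Set.Ioo (min (f p.2) (f p.1)) (max (f p.2) (f p.1)) := by
          intro k hk1 hk2
          rw [min_comm, max_comm]; exact hap k hk2 hk1
        have haq' : ∀ k, k ≠ q.2 → k ≠ q.1 →
            f k ∉ Set.Ioo (min (f q.2) (f q.1)) (max (f q.2) (f q.1)) := by
          intro k hk1 hk2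
          rw [min_comm, max_comm]; exact haq k hk2 hk1
        have e2 : p.1 = q.1 := by
          apply succ_unique f hf (s := p.2) h1 (e1 ▸ h2) hap'
          rw [e1]; exact haq'
        exact Prod.ext e2 e1
  calc P.card ≤ _ := hcard
    _ ≤ 2 * (m - 1) := by
        rw [Finset.card_product, Finset.card_erase_of_mem (Finset.mem_univ _)]
        simp [mul_comm]

/-- for exchangeable, a.s. pairwise-distinct real random variables
`y₁,…,y_m` (`m ≥ 2`) and distinct indices `i, j`, the probability that `y j` is
adjacent to `y i` in sorted order (no other value lies strictly between them)
is at most `2/(m-1)`. -/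
theorem stmt_4 (m : ℕ) (hm : 2 ≤ m)
    (Ω : Type*) [MeasureSpace Ω] [IsProbabilityMeasure (ℙ : Measure Ω)]
    (y : Fin m → Ω → ℝ) (hmeas : ∀ k, Measurable (y k))
    (hexch : ∀ σ : Equiv.Perm (Fin m),
      Measure.map (fun ω (k : Fin m) => y (σ k) ω) ℙ = Measure.map (fun ω (k : Fin m) => y k ω) ℙ)
    (hdistinct : ∀ k l : Fin m, k ≠ l → ℙ {ω | y k ω = y l ω} = 0)
    (i j : Fin m) (hij : i ≠ j) :
    ℙ {ω | ∀ k : Fin m, k ≠ i → k ≠ j →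
        y k ω ∉ Set.Ioo (min (y i ω) (y j ω)) (max (y i ω) (y j ω))}
      ≤ ENNReal.ofReal (2 / ((m : ℝ) - 1)) := by
  classical
  set Y : Ω → (Fin m → ℝ) := fun ω k => y k ω with hYdef
  have hY : Measurable Y := measurable_pi_lambda _ hmeas
  set S : Fin m → Fin m → Set (Fin m → ℝ) := fun a b =>
    {f | ∀ k, k ≠ a → k ≠ b → f k ∉ Set.Ioo (min (f a) (f b)) (max (f a) (f b))} with hSdef
  have hS : ∀ a b, MeasurableSet (S a b) := by
    intro a b
    have hrw : S a b = ⋂ k, {f : Fin m → ℝ |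
        k ≠ a → k ≠ b → f k ∉ Set.Ioo (min (f a) (f b)) (max (f a) (f b))} := by
      ext f; simp [hSdef, Set.mem_iInter]
    rw [hrw]
    apply MeasurableSet.iInter
    intro k
    by_cases hka : k = a
    · simp [hka]
    by_cases hkb : k = b
    · simp [hkb]
    have hrw2 : {f : Fin m → ℝ |
        k ≠ a → k ≠ b → f k ∉ Set.Ioo (min (f a) (f b)) (max (f a) (f b))}
        = ({f | min (f a) (f b) < f k} ∩ {f | f k < max (f a) (f b)})ᶜ := by
      ext f; simp [hka, hkb, Set.mem_Ioo]
    rw [hrw2]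
    exact (((measurableSet_lt ((measurable_pi_apply a).min (measurable_pi_apply b))
      (measurable_pi_apply k))).inter
      (measurableSet_lt (measurable_pi_apply k)
        ((measurable_pi_apply a).max (measurable_pi_apply b)))).compl
  -- equal probabilities
  have hEq : ∀ a b : Fin m, a ≠ b → ℙ (Y ⁻¹' S a b) = ℙ (Y ⁻¹' S i j) := by
    intro a b hab
    set τ := Equiv.swap i a with hτ
    set c := τ j with hc
    have hτi : τ i = a := Equiv.swap_apply_left i a
    have hca : c ≠ a := by
      intro h
      exact hij (τ.injective (h.trans hτi.symm)).symm
    set σ := τ.trans (Equiv.swap c b) with hσ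
    have hσi : σ i = a := by
      simp only [hσ, Equiv.trans_apply, hτi]
      exact Equiv.swap_apply_of_ne_of_ne (Ne.symm hca) hab
    have hσj : σ j = b := by
      simp only [hσ, Equiv.trans_apply, ← hc]
      exact Equiv.swap_apply_left c b
    have hpre : (fun ω (k : Fin m) => y (σ k) ω) ⁻¹' S i j = Y ⁻¹' S a b := by
      ext ω
      simp only [Set.mem_preimage, hSdef, Set.mem_setOf_eq, hYdef]
      constructor
      · intro h k hka hkb
        have h1 : σ.symm k ≠ i := by
          intro hk
          apply hka
          rw [← hσi, ← hk, Equiv.apply_symm_apply]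
        have h2 : σ.symm k ≠ j := by
          intro hk
          apply hkb
          rw [← hσj, ← hk, Equiv.apply_symm_apply]
        have := h (σ.symm k) h1 h2
        rwa [hσi, hσj, Equiv.apply_symm_apply] at this
      · intro h k hki hkj
        have hk1 : σ k ≠ a := by rw [← hσi]; exact fun hk => hki (σ.injective hk)
        have hk2 : σ k ≠ b := by rw [← hσj]; exact fun hk => hkj (σ.injective hk)
        have := h (σ k) hk1 hk2
        rwa [hσi, hσj]
    calc ℙ (Y ⁻¹' S a b) = ℙ ((fun ω (k : Fin m) => y (σ k) ω) ⁻¹' S i j) := by rw [hpre]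
      _ = Measure.map (fun ω (k : Fin m) => y (σ k) ω) ℙ (S i j) :=
          (Measure.map_apply (measurable_pi_lambda _ fun k => hmeas (σ k)) (hS i j)).symm
      _ = Measure.map Y ℙ (S i j) := by rw [hexch σ]
      _ = ℙ (Y ⁻¹' S i j) := Measure.map_apply hY (hS i j)
  -- a.e. injectivity
  have hae : ∀ᵐ ω ∂(ℙ : Measure Ω), Function.Injective (fun k => y k ω) := by
    have hnull : ℙ (⋃ (p : Fin m × Fin m) (_ : p.1 ≠ p.2), {ω | y p.1 ω = y p.2 ω}) = 0 := by
      apply measure_iUnion_null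
      intro p
      apply measure_iUnion_null
      intro hp
      exact hdistinct _ _ hp
    rw [ae_iff]
    apply measure_mono_null _ hnull
    intro ω hω
    simp only [Set.mem_setOf_eq] at hω
    obtain ⟨k, l, hkl, hne⟩ := Function.not_injective_iff.1 hω
    exact Set.mem_iUnion.2 ⟨(k, l), Set.mem_iUnion.2 ⟨hne, hkl⟩⟩
  -- the counting bound
  set P := (Finset.univ : Finset (Fin m)).offDiag with hPdef
  have hPcard : P.card = m * m - m := by
    rw [hPdef, Finset.offDiag_card]
    simp
  have key : P.card • ℙ (Y ⁻¹' S i j) ≤ ((2 * (m - 1) : ℕ) : ENNReal) := by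
    have h1 : ∑ p ∈ P, ℙ (Y ⁻¹' S p.1 p.2) = P.card • ℙ (Y ⁻¹' S i j) := by
      rw [← Finset.sum_const]
      exact Finset.sum_congr rfl fun p hp => hEq p.1 p.2 (Finset.mem_offDiag.1 hp).2.2
    rw [← h1]
    calc ∑ p ∈ P, ℙ (Y ⁻¹' S p.1 p.2)
        = ∑ p ∈ P, ∫⁻ ω, (Y ⁻¹' S p.1 p.2).indicator 1 ω ∂ℙ := by
          refine Finset.sum_congr rfl fun p _ => ?_
          rw [lintegral_indicator_one ((hS p.1 p.2).preimage hY)]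
      _ = ∫⁻ ω, ∑ p ∈ P, (Y ⁻¹' S p.1 p.2).indicator 1 ω ∂ℙ :=
          (lintegral_finset_sum _ fun p _ =>
            (measurable_one.indicator ((hS p.1 p.2).preimage hY))).symm
      _ ≤ ∫⁻ _ω, ((2 * (m - 1) : ℕ) : ENNReal) ∂ℙ := by
          apply lintegral_mono_ae
          filter_upwards [hae] with ω hω
          have hcalc : ∑ p ∈ P, (Y ⁻¹' S p.1 p.2).indicator 1 ω
              = ((P.filter (fun p => ω ∈ Y ⁻¹' S p.1 p.2)).card : ENNReal) := by
            rw [← Finset.sum_boole]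
            refine Finset.sum_congr rfl fun p _ => ?_
            simp [Set.indicator_apply]
          rw [hcalc]
          have hfil : P.filter (fun p => ω ∈ Y ⁻¹' S p.1 p.2)
              = Finset.univ.filter (fun p : Fin m × Fin m => p.1 ≠ p.2 ∧
                  ∀ k, k ≠ p.1 → k ≠ p.2 →
                    y k ω ∉ Set.Ioo (min (y p.1 ω) (y p.2 ω)) (max (y p.1 ω) (y p.2 ω))) := by
            ext p
            simp only [hPdef, Finset.mem_filter, Finset.mem_offDiag, Finset.mem_univ,
              Set.mem_preimage, hSdef, Set.mem_setOf_eq, hYdef, true_and]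
          rw [hfil]
          exact_mod_cast Nat.cast_le.2 (adj_card_le m (fun k => y k ω) hω)
      _ = ((2 * (m - 1) : ℕ) : ENNReal) := by simp
  -- final arithmetic
  have hgoal : ℙ {ω | ∀ k : Fin m, k ≠ i → k ≠ j →
      y k ω ∉ Set.Ioo (min (y i ω) (y j ω)) (max (y i ω) (y j ω))} = ℙ (Y ⁻¹' S i j) := rfl
  rw [hgoal]
  have hmmlt : m < m * m := by nlinarith
  have hpos : 0 < m * m - m := Nat.sub_pos_of_lt hmmlt
  have hN0 : ((m * m - m : ℕ) : ENNReal) ≠ 0 := by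
    simp only [ne_eq, Nat.cast_eq_zero]
    exact hpos.ne'
  have hdiv : ℙ (Y ⁻¹' S i j) ≤ ((2 * (m - 1) : ℕ) : ENNReal) / ((m * m - m : ℕ) : ENNReal) := by
    rw [ENNReal.le_div_iff_mul_le (Or.inl hN0) (Or.inl (ENNReal.natCast_ne_top _))]
    rw [mul_comm]
    rw [hPcard, nsmul_eq_mul] at key
    exact_mod_cast key
  refine hdiv.trans ?_
  rw [← ENNReal.ofReal_natCast (2 * (m - 1)), ← ENNReal.ofReal_natCast (m * m - m),
    ← ENNReal.ofReal_div_of_pos (by exact_mod_cast hpos)]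
  apply ENNReal.ofReal_le_ofReal
  have hm1 : (1 : ℕ) ≤ m := by omega
  have hmm : m ≤ m * m := Nat.le_mul_of_pos_left m (by omega)
  push_cast [Nat.cast_sub hm1, Nat.cast_sub hmm]
  have hmr : (2 : ℝ) ≤ (m : ℝ) := by exact_mod_cast hm
  rw [div_le_div_iff₀ (by nlinarith) (by nlinarith)]
  nlinarith
end

section
/- Let $S$ be a finite planar point set and $R_\alpha$ an axis-parallel rectangle of left-right width $w$. Let $(a,b)$ be the closest pair in $S \cap R_\alpha$ and suppose $|a.y - b.y| \ge 2w$. Then the number of points of $(S \cap R_\alpha) \setminus \{a,b\}$ whose $y$-coordinates lie strictly between $a.y$ and $b.y$ is at most $100$. -/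
open scoped Classical

/-- An axis-parallel rectangle `[a,b] × [c,d]` in the Euclidean plane. -/
noncomputable def rect (a b c d : ℝ) : Set (EuclideanSpace ℝ (Fin 2)) :=
  {p | p 0 ∈ Set.Icc a b ∧ p 1 ∈ Set.Icc c d}

lemma aux3 (δ K m M u v t : ℝ) (hδ : 0 < δ) (hK : 3 * δ ^ 2 ≤ 4 * K)
    (huv : K ≤ (u - v) ^ 2) (hvt : K ≤ (v - t) ^ 2)
    (hmu : m < u) (htM : t < M) (hMm : M - m ≤ δ)
    (huvle : u ≤ v) (hvtle : v ≤ t) : False := by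
  nlinarith [mul_nonneg (sub_nonneg.2 huvle) (sub_nonneg.2 hvtle), sq_nonneg (t - u)]

lemma aux (δ K m M y1 y2 y3 : ℝ) (hδ : 0 < δ) (hK : 3 * δ ^ 2 ≤ 4 * K)
    (h12 : K ≤ (y1 - y2) ^ 2) (h13 : K ≤ (y1 - y3) ^ 2) (h23 : K ≤ (y2 - y3) ^ 2)
    (hm1 : m < y1) (hM1 : y1 < M) (hm2 : m < y2) (hM2 : y2 < M)
    (hm3 : m < y3) (hM3 : y3 < M) (hMm : M - m ≤ δ) : False := by
  have h21 : K ≤ (y2 - y1) ^ 2 := by nlinarith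
  have h31 : K ≤ (y3 - y1) ^ 2 := by nlinarith
  have h32 : K ≤ (y3 - y2) ^ 2 := by nlinarith
  rcases le_total y1 y2 with h1 | h1 <;> rcases le_total y2 y3 with h2 | h2 <;>
    rcases le_total y1 y3 with h3 | h3
  · exact aux3 δ K m M y1 y2 y3 hδ hK h12 h23 hm1 hM3 hMm h1 h2
  · exact aux3 δ K m M y1 y2 y3 hδ hK h12 h23 hm1 hM3 hMm h1 h2
  · exact aux3 δ K m M y1 y3 y2 hδ hK h13 h32 hm1 hM2 hMm h3 h2
  · exact aux3 δ K m M y3 y1 y2 hδ hK h31 h12 hm3 hM2 hMm h3 h1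
  · exact aux3 δ K m M y2 y1 y3 hδ hK h21 h13 hm2 hM3 hMm h1 h3
  · exact aux3 δ K m M y2 y3 y1 hδ hK h23 h31 hm2 hM1 hMm h2 h3
  · exact aux3 δ K m M y3 y2 y1 hδ hK h32 h21 hm3 hM1 hMm h2 h1
  · exact aux3 δ K m M y3 y2 y1 hδ hK h32 h21 hm3 hM1 hMm h2 h1

lemma dist_sq_eq (p q : EuclideanSpace ℝ (Fin 2)) :
    dist p q ^ 2 = (p 0 - q 0) ^ 2 + (p 1 - q 1) ^ 2 := by
  rw [EuclideanSpace.dist_eq, Real.sq_sqrt (by positivity)]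
  simp [Fin.sum_univ_two, Real.dist_eq, sq_abs]

/-- if `(a,b)` is the closest pair in `S ∩ R_α`, where `R_α` has left-right
width `w`, and `|a.y - b.y| ≥ 2w`, then at most `100` points of `(S ∩ R_α) \ {a,b}` have
`y`-coordinate strictly between `a.y` and `b.y`. -/
theorem stmt_6 (S : Finset (EuclideanSpace ℝ (Fin 2)))
    (x₁ y₁ y₂ w : ℝ) (hw : 0 < w)
    (Rα : Set (EuclideanSpace ℝ (Fin 2))) (hRα : Rα = rect x₁ (x₁ + w) y₁ y₂)
    (T : Finset (EuclideanSpace ℝ (Fin 2))) (hT : T = S.filter (· ∈ Rα))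
    (hcard : 2 ≤ T.card)
    (a b : EuclideanSpace ℝ (Fin 2)) (ha : a ∈ T) (hb : b ∈ T) (hab : a ≠ b)
    (hmin : ∀ c ∈ T, ∀ d ∈ T, c ≠ d → dist a b ≤ dist c d)
    (hy : 2 * w ≤ |a 1 - b 1|) :
    (T.filter (fun p => p ≠ a ∧ p ≠ b ∧
      min (a 1) (b 1) < p 1 ∧ p 1 < max (a 1) (b 1))).card ≤ 100 := by
  set δ := dist a b with hδdef
  have hδ : 0 < δ := dist_pos.2 hab
  -- x-coordinates of points of T lie in [x₁, x₁ + w]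
  have hx : ∀ p ∈ T, x₁ ≤ p 0 ∧ p 0 ≤ x₁ + w := by
    intro p hp
    rw [hT, Finset.mem_filter] at hp
    have := hp.2
    rw [hRα] at this
    exact ⟨this.1.1, this.1.2⟩
  have hdab : δ ^ 2 = (a 0 - b 0) ^ 2 + (a 1 - b 1) ^ 2 := dist_sq_eq a b
  have habs : |a 1 - b 1| ^ 2 ≤ δ ^ 2 := by
    rw [sq_abs]; nlinarith [sq_nonneg (a 0 - b 0)]
  have hwδ : 2 * w ≤ δ := by
    have : (2 * w) ^ 2 ≤ δ ^ 2 := le_trans (by nlinarith [abs_nonneg (a 1 - b 1)]) habs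
    nlinarith
  have hMm : max (a 1) (b 1) - min (a 1) (b 1) ≤ δ := by
    rcases le_total (a 1) (b 1) with h | h
    · rw [max_eq_right h, min_eq_left h]
      calc b 1 - a 1 ≤ |a 1 - b 1| := by rw [abs_sub_comm]; exact le_abs_self _
        _ ≤ δ := by nlinarith [abs_nonneg (a 1 - b 1)]
    · rw [max_eq_left h, min_eq_right h]
      calc a 1 - b 1 ≤ |a 1 - b 1| := le_abs_self _
        _ ≤ δ := by nlinarith [abs_nonneg (a 1 - b 1)]
  set K := δ ^ 2 - w ^ 2 with hKdef
  have hK : 3 * δ ^ 2 ≤ 4 * K := by nlinarith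
  -- key gap lemma
  have hgap : ∀ p ∈ T, ∀ q ∈ T, p ≠ q → K ≤ (p 1 - q 1) ^ 2 := by
    intro p hp q hq hpq
    have hd : δ ≤ dist p q := hmin p hp q hq hpq
    have hdpq : dist p q ^ 2 = (p 0 - q 0) ^ 2 + (p 1 - q 1) ^ 2 := dist_sq_eq p q
    have hx1 := hx p hp
    have hx2 := hx q hq
    have hxw : (p 0 - q 0) ^ 2 ≤ w ^ 2 := by nlinarith
    nlinarith [dist_nonneg (x := p) (y := q)]
  set F := T.filter (fun p => p ≠ a ∧ p ≠ b ∧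
      min (a 1) (b 1) < p 1 ∧ p 1 < max (a 1) (b 1)) with hF
  have h2 : F.card ≤ 2 := by
    by_contra h
    push_neg at h
    obtain ⟨p, q, r, hp, hq, hr, hpq, hpr, hqr⟩ := Finset.two_lt_card_iff.1 h
    rw [hF, Finset.mem_filter] at hp hq hr
    exact aux δ K (min (a 1) (b 1)) (max (a 1) (b 1)) (p 1) (q 1) (r 1) hδ hK
      (hgap p hp.1 q hq.1 hpq) (hgap p hp.1 r hr.1 hpr) (hgap q hq.1 r hr.1 hqr)
      hp.2.2.2.1 hp.2.2.2.2 hq.2.2.2.1 hq.2.2.2.2 hr.2.2.2.1 hr.2.2.2.2 hMm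
  omega
end

section
/- Let $a_1, \dots, a_m$ be i.i.d. uniform random points in a region $R \subseteq \mathbb{R}^2$ of finite positive area. For $\delta > 0$, let $E_{\delta,i}$ denote the event that all pairwise distances among $a_1,\dots,a_i$ are at least $\delta$. If every disk of radius $\delta/2$ centered at a point of $R$ intersects $R$ in area at least $\mu$, then for each $i \ge 3$, $\Pr[E_{\delta,i} \mid E_{\delta,i-1}] \le 1 - \frac{(i-1)\mu}{\mathrm{Area}(R)}$ (whenever $(i-1)\mu \le \mathrm{Area}(R)$ and $\Pr[E_{\delta,i-1}] > 0$). -/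
open MeasureTheory ProbabilityTheory
open scoped ENNReal

/-- Core bound: if the points `x k` are in `R`, pairwise `δ`-separated, then the `ν`-measure of
the set of points of `R` that are `δ`-far from all of them is at most `1 - card * μ₀ / A`. -/
theorem corebound {ι : Type*} [Fintype ι]
    (R : Set (EuclideanSpace ℝ (Fin 2))) (hRmeas : MeasurableSet R)
    (hR0 : 0 < volume R) (hRtop : volume R < ⊤)
    (δ μ₀ : ℝ) (hδ : 0 < δ) (hμ₀ : 0 ≤ μ₀)
    (hball : ∀ x ∈ R, ENNReal.ofReal μ₀ ≤ volume (Metric.closedBall x (δ / 2) ∩ R))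
    (x : ι → EuclideanSpace ℝ (Fin 2)) (hxR : ∀ k, x k ∈ R)
    (hxd : ∀ k l, k ≠ l → δ ≤ dist (x k) (x l)) :
    ((volume R)⁻¹ • volume.restrict R) {y | ∀ k, δ ≤ dist (x k) y} ≤
      ENNReal.ofReal (1 - (Fintype.card ι : ℝ) * μ₀ / (volume R).toReal) := by
  classical
  set A : ℝ := (volume R).toReal with hA
  have hApos : 0 < A := ENNReal.toReal_pos hR0.ne' hRtop.ne
  set f : ι → Set (EuclideanSpace ℝ (Fin 2)) := fun k => Metric.closedBall (x k) (δ/2) ∩ R with hf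
  have hfmeas : ∀ k, MeasurableSet (f k) := fun k =>
    (measurableSet_closedBall).inter hRmeas
  have hdisj : Set.Pairwise (↑(Finset.univ : Finset ι)) (Function.onFun (MeasureTheory.AEDisjoint volume) f) := by
    intro k _ l _ hkl
    refine measure_mono_null ?_ (Measure.addHaar_sphere volume (x k) (δ/2))
    intro z ⟨⟨hz1, _⟩, ⟨hz2, _⟩⟩
    have h1 : dist (x k) z ≤ δ/2 := by rwa [Metric.mem_closedBall, dist_comm] at hz1
    have h2 : dist z (x l) ≤ δ/2 := by rwa [Metric.mem_closedBall] at hz2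
    have h3 : δ ≤ dist (x k) (x l) := hxd k l hkl
    have h4 : dist (x k) (x l) ≤ dist (x k) z + dist z (x l) := dist_triangle _ _ _
    have h5 : δ/2 ≤ dist (x k) z := by linarith
    refine Metric.mem_sphere.mpr ?_
    rw [dist_comm]
    exact le_antisymm h1 h5
  have hUvol : volume (⋃ k ∈ Finset.univ, f k) = ∑ k : ι, volume (f k) :=
    measure_biUnion_finset₀ hdisj (fun k _ => (hfmeas k).nullMeasurableSet)
  have hUge : (Fintype.card ι : ℝ≥0∞) * ENNReal.ofReal μ₀ ≤ volume (⋃ k ∈ Finset.univ, f k) := by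
    rw [hUvol]
    calc (Fintype.card ι : ℝ≥0∞) * ENNReal.ofReal μ₀
        = ∑ _k : ι, ENNReal.ofReal μ₀ := by
          rw [Finset.sum_const, nsmul_eq_mul, Finset.card_univ]
      _ ≤ ∑ k : ι, volume (f k) := Finset.sum_le_sum fun k _ => hball (x k) (hxR k)
  set U : Set (EuclideanSpace ℝ (Fin 2)) := ⋃ k ∈ Finset.univ, f k with hU
  have hUsub : U ⊆ R := by
    simp only [hU, Set.iUnion_subset_iff]
    exact fun k _ => Set.inter_subset_right
  have hTmeas : MeasurableSet {y : EuclideanSpace ℝ (Fin 2) | ∀ k, δ ≤ dist (x k) y} := by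
    have : {y : EuclideanSpace ℝ (Fin 2) | ∀ k, δ ≤ dist (x k) y}
        = ⋂ k, {y | δ ≤ dist (x k) y} := by ext y; simp
    rw [this]
    exact MeasurableSet.iInter fun k =>
      measurableSet_le measurable_const (measurable_const.dist measurable_id)
  have hsub2 : {y | ∀ k, δ ≤ dist (x k) y} ∩ R ⊆ R \ U := by
    rintro y ⟨hy1, hy2⟩
    refine ⟨hy2, ?_⟩
    simp only [hU, Set.mem_iUnion, hf]
    rintro ⟨k, -, hk, -⟩
    have := hy1 k
    rw [Metric.mem_closedBall, dist_comm] at hk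
    linarith
  have hUne : volume U ≠ ⊤ := (lt_of_le_of_lt (measure_mono hUsub) hRtop).ne
  have hdiff : volume (R \ U) = volume R - volume U :=
    measure_diff hUsub (MeasurableSet.biUnion (Finset.countable_toSet _)
      fun k _ => hfmeas k).nullMeasurableSet hUne
  calc ((volume R)⁻¹ • volume.restrict R) {y | ∀ k, δ ≤ dist (x k) y}
      = (volume R)⁻¹ * volume ({y | ∀ k, δ ≤ dist (x k) y} ∩ R) := by
        rw [Measure.smul_apply, smul_eq_mul, Measure.restrict_apply hTmeas]
    _ ≤ (volume R)⁻¹ * volume (R \ U) := by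
        gcongr
    _ ≤ (volume R)⁻¹ * (volume R - (Fintype.card ι : ℝ≥0∞) * ENNReal.ofReal μ₀) := by
        rw [hdiff]
        exact mul_le_mul_right (tsub_le_tsub_left hUge _) _
    _ = ENNReal.ofReal (1 - (Fintype.card ι : ℝ) * μ₀ / A) := by
        rw [← ENNReal.ofReal_toReal hRtop.ne, ← hA,
          show ((Fintype.card ι : ℝ≥0∞) * ENNReal.ofReal μ₀)
             = ENNReal.ofReal ((Fintype.card ι : ℝ) * μ₀) by
            rw [ENNReal.ofReal_mul (by positivity), ENNReal.ofReal_natCast],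
          ← ENNReal.ofReal_sub _ (by positivity),
          ← ENNReal.ofReal_inv_of_pos hApos,
          ← ENNReal.ofReal_mul (by positivity)]
        congr 1
        field_simp


/-- for i.i.d. uniform points `a₁,…,a_m` in a region `R` of finite positive
area, with `E_{δ,n}` the event that the first `n` points are pairwise at distance `≥ δ`,
if every disk of radius `δ/2` centered in `R` meets `R` in area `≥ μ₀`, then for `3 ≤ i ≤ m`
(with `(i-1)μ₀ ≤ Area(R)` and `Pr[E_{δ,i-1}] > 0`),
`Pr[E_{δ,i} | E_{δ,i-1}] ≤ 1 - (i-1)μ₀/Area(R)`. -/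
theorem stmt_16 (m i : ℕ) (hi : 3 ≤ i) (him : i ≤ m)
    (R : Set (EuclideanSpace ℝ (Fin 2))) (hRmeas : MeasurableSet R)
    (hR0 : 0 < volume R) (hRtop : volume R < ⊤)
    (Ω : Type*) [MeasureSpace Ω] [IsProbabilityMeasure (ℙ : Measure Ω)]
    (a : Fin m → Ω → EuclideanSpace ℝ (Fin 2)) (hmeas : ∀ k, Measurable (a k))
    (hindep : iIndepFun a ℙ)
    (hunif : ∀ k, Measure.map (a k) ℙ = (volume R)⁻¹ • volume.restrict R)
    (δ μ₀ : ℝ) (hδ : 0 < δ) (hμ₀ : 0 ≤ μ₀)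
    (hball : ∀ x ∈ R, ENNReal.ofReal μ₀ ≤ volume (Metric.closedBall x (δ / 2) ∩ R))
    (E : ℕ → Set Ω)
    (hE : ∀ n, E n = {ω | ∀ k l : Fin m, (k : ℕ) < n → (l : ℕ) < n → k ≠ l →
      δ ≤ dist (a k ω) (a l ω)})
    (hsmall : ((i : ℝ) - 1) * μ₀ ≤ (volume R).toReal)
    (hpos : 0 < ℙ (E (i - 1))) :
    ProbabilityTheory.cond ℙ (E (i - 1)) (E i) ≤
      ENNReal.ofReal (1 - ((i : ℝ) - 1) * μ₀ / (volume R).toReal) := by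
  classical
  have hEmeas : ∀ N, MeasurableSet (E N) := by
    intro N
    rw [hE]
    have h : {ω | ∀ k l : Fin m, (k : ℕ) < N → (l : ℕ) < N → k ≠ l → δ ≤ dist (a k ω) (a l ω)}
        = ⋂ k : Fin m, ⋂ l : Fin m, ⋂ (_ : (k : ℕ) < N), ⋂ (_ : (l : ℕ) < N), ⋂ (_ : k ≠ l),
            {ω | δ ≤ dist (a k ω) (a l ω)} := by
      ext ω; simp [Set.mem_iInter]
    rw [h]
    exact .iInter fun k => .iInter fun l => .iInter fun _ => .iInter fun _ => .iInter fun _ =>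
      measurableSet_le measurable_const ((hmeas k).dist (hmeas l))
  set ν : Measure (EuclideanSpace ℝ (Fin 2)) := (volume R)⁻¹ • volume.restrict R with hν
  haveI hνprob : IsProbabilityMeasure ν := by
    constructor
    rw [hν, Measure.smul_apply, Measure.restrict_apply_univ, smul_eq_mul,
      ENNReal.inv_mul_cancel hR0.ne' hRtop.ne]
  set n := i - 1 with hn
  have hnm : n < m := by omega
  have hni : i = n + 1 := by omega
  have hcast : ((i : ℝ) - 1) = (n : ℝ) := by
    rw [hn, Nat.cast_sub (by omega : 1 ≤ i)]; norm_num
  rw [hcast]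
  set j : Fin m := ⟨n, hnm⟩ with hj
  set S : Finset (Fin m) := Finset.univ.filter (fun k => (k : ℕ) < n) with hS
  have hmemS : ∀ k : Fin m, k ∈ S ↔ (k : ℕ) < n := by intro k; simp [hS]
  have hcard : Fintype.card ↥S = n := by
    have e : ↥S ≃ Fin n :=
      { toFun := fun k => ⟨k.1.1, (hmemS k.1).1 k.2⟩
        invFun := fun k => ⟨⟨k.1, lt_trans k.2 hnm⟩, (hmemS _).2 k.2⟩
        left_inv := fun k => Subtype.ext (Fin.ext rfl)
        right_inv := fun k => Fin.ext rfl }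
    rw [Fintype.card_congr e, Fintype.card_fin]
  set X : Ω → (↥S → EuclideanSpace ℝ (Fin 2)) := fun ω k => a k.1 ω with hX
  have hXmeas : Measurable X := measurable_pi_lambda _ fun k => hmeas k.1
  -- independence of X and a j
  have hXY : ProbabilityTheory.IndepFun X (a j) ℙ := by
    have hdisj : Disjoint S {j} := by
      rw [Finset.disjoint_singleton_right, hmemS]; exact lt_irrefl n
    have h1 := hindep.indepFun_finset S {j} hdisj hmeas
    have h2 := h1.comp (measurable_id (α := ↥S → EuclideanSpace ℝ (Fin 2)))
      (measurable_pi_apply (⟨j, Finset.mem_singleton_self j⟩ : ({j} : Finset (Fin m))))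
    exact h2
  set μX : Measure (↥S → EuclideanSpace ℝ (Fin 2)) := Measure.map X ℙ with hμX
  haveI : IsProbabilityMeasure μX := Measure.isProbabilityMeasure_map hXmeas.aemeasurable
  have hmap : Measure.map (fun ω => (X ω, a j ω)) ℙ = μX.prod ν := by
    rw [hμX, ← hunif j]
    exact (ProbabilityTheory.indepFun_iff_map_prod_eq_prod_map_map hXmeas.aemeasurable
      (hmeas j).aemeasurable).mp hXY
  -- the sets
  set A' : Set (↥S → EuclideanSpace ℝ (Fin 2)) :=
    {x | (∀ k, x k ∈ R) ∧ ∀ k l, k ≠ l → δ ≤ dist (x k) (x l)} with hA'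
  have hA'meas : MeasurableSet A' := by
    have h : A' = (⋂ k, (fun x : ↥S → EuclideanSpace ℝ (Fin 2) => x k) ⁻¹' R) ∩
        ⋂ k, ⋂ l, ⋂ (_ : k ≠ l), {x : ↥S → EuclideanSpace ℝ (Fin 2) | δ ≤ dist (x k) (x l)} := by
      ext x; simp [hA', Set.mem_iInter]
    rw [h]
    exact (MeasurableSet.iInter fun k => measurable_pi_apply k hRmeas).inter
      (MeasurableSet.iInter fun k => .iInter fun l => .iInter fun _ =>
        measurableSet_le measurable_const ((measurable_pi_apply k).dist (measurable_pi_apply l)))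
  set D : Set ((↥S → EuclideanSpace ℝ (Fin 2)) × EuclideanSpace ℝ (Fin 2)) :=
    {p | p.1 ∈ A' ∧ ∀ k, δ ≤ dist (p.1 k) p.2} with hD
  have hDmeas : MeasurableSet D := by
    have h : D = (Prod.fst ⁻¹' A') ∩
        ⋂ k, {p : (↥S → EuclideanSpace ℝ (Fin 2)) × EuclideanSpace ℝ (Fin 2) |
          δ ≤ dist (p.1 k) p.2} := by
      ext p; simp [hD, Set.mem_iInter]
    rw [h]
    exact (measurable_fst hA'meas).inter (MeasurableSet.iInter fun k =>
      measurableSet_le measurable_const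
        (((measurable_pi_apply k).comp measurable_fst).dist measurable_snd))
  -- a.s. membership in R
  have haR : ∀ k : Fin m, ∀ᵐ ω ∂ℙ, a k ω ∈ R := by
    intro k
    refine ae_iff.mpr ?_
    have h : {ω | ¬ a k ω ∈ R} = a k ⁻¹' Rᶜ := rfl
    rw [h, ← Measure.map_apply (hmeas k) hRmeas.compl, hunif k, hν, Measure.smul_apply,
      Measure.restrict_apply hRmeas.compl, smul_eq_mul, Set.compl_inter_self, measure_empty,
      mul_zero]
  have hgood : ℙ {ω | ∀ k : ↥S, a k.1 ω ∈ R}ᶜ = 0 := by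
    have h := ae_all_iff.mpr fun k : ↥S => haR k.1
    rw [ae_iff] at h
    simpa [Set.compl_setOf] using h
  set c : ℝ≥0∞ := ENNReal.ofReal (1 - (n : ℝ) * μ₀ / (volume R).toReal) with hc
  -- key inequality
  have hkey : ℙ (E i) ≤ c * ℙ (E n) := by
    have step1 : ℙ (E i) = ℙ (E i ∩ {ω | ∀ k : ↥S, a k.1 ω ∈ R}) :=
      (measure_inter_conull hgood).symm
    have step2 : E i ∩ {ω | ∀ k : ↥S, a k.1 ω ∈ R} ⊆ (fun ω => (X ω, a j ω)) ⁻¹' D := by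
      rintro ω ⟨h1, h2⟩
      rw [hE] at h1
      refine ⟨⟨fun k => h2 k, fun k l hkl => ?_⟩, fun k => ?_⟩
      · have hkn := (hmemS k.1).1 k.2
        have hln := (hmemS l.1).1 l.2
        exact h1 k.1 l.1 (by omega) (by omega) (fun he => hkl (Subtype.ext he))
      · have hkn := (hmemS k.1).1 k.2
        refine h1 k.1 j (by omega) (by simp [hj]; omega) ?_
        intro he
        have : (k.1 : ℕ) = n := by rw [he]
        omega
    have step3 : ℙ ((fun ω => (X ω, a j ω)) ⁻¹' D) = (μX.prod ν) D := by
      rw [← hmap, Measure.map_apply (hXmeas.prodMk (hmeas j)) hDmeas]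
    have step4 : (μX.prod ν) D = ∫⁻ x, ν (Prod.mk x ⁻¹' D) ∂μX := Measure.prod_apply hDmeas
    have step5 : ∀ x, ν (Prod.mk x ⁻¹' D) ≤ A'.indicator (fun _ => c) x := by
      intro x
      by_cases hx : x ∈ A'
      · rw [Set.indicator_of_mem hx]
        have h : Prod.mk x ⁻¹' D = {y | ∀ k : ↥S, δ ≤ dist (x k) y} := by
          ext y
          simp only [hD, Set.mem_preimage, Set.mem_setOf_eq, hx, true_and]
        rw [h, hc, hν]
        have hcb := corebound R hRmeas hR0 hRtop δ μ₀ hδ hμ₀ hball x hx.1 hx.2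
        rwa [hcard] at hcb
      · rw [Set.indicator_of_notMem hx]
        have h : Prod.mk x ⁻¹' D = ∅ := by
          ext y
          simp only [hD, Set.mem_preimage, Set.mem_setOf_eq, hx, false_and,
            Set.mem_empty_iff_false]
        simp [h]
    have step6 : ∫⁻ x, ν (Prod.mk x ⁻¹' D) ∂μX ≤ c * μX A' := by
      calc ∫⁻ x, ν (Prod.mk x ⁻¹' D) ∂μX ≤ ∫⁻ x, A'.indicator (fun _ => c) x ∂μX :=
            lintegral_mono step5
        _ = c * μX A' := by
            rw [lintegral_indicator hA'meas, setLIntegral_const]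
    have step7 : μX A' ≤ ℙ (E n) := by
      rw [hμX, Measure.map_apply hXmeas hA'meas]
      refine measure_mono ?_
      intro ω hω
      rw [hE]
      intro k l hk hl hkl
      exact hω.2 ⟨k, (hmemS k).2 hk⟩ ⟨l, (hmemS l).2 hl⟩
        (fun h => hkl (congrArg Subtype.val h))
    calc ℙ (E i) = ℙ (E i ∩ {ω | ∀ k : ↥S, a k.1 ω ∈ R}) := step1
      _ ≤ ℙ ((fun ω => (X ω, a j ω)) ⁻¹' D) := measure_mono step2
      _ = (μX.prod ν) D := step3
      _ = ∫⁻ x, ν (Prod.mk x ⁻¹' D) ∂μX := step4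
      _ ≤ c * μX A' := step6
      _ ≤ c * ℙ (E n) := mul_le_mul_right step7 c
  -- conclude
  have hsub : E i ⊆ E n := by
    rw [hE, hE]
    intro ω hω k l hk hl hkl
    exact hω k l (by omega) (by omega) hkl
  rw [ProbabilityTheory.cond_apply (hEmeas n) ℙ (E i),
    Set.inter_eq_self_of_subset_right hsub]
  calc (ℙ (E n))⁻¹ * ℙ (E i) ≤ (ℙ (E n))⁻¹ * (c * ℙ (E n)) := mul_le_mul_right hkey _
    _ = c * ((ℙ (E n))⁻¹ * ℙ (E n)) := by ring
    _ = c := by rw [ENNReal.inv_mul_cancel hpos.ne' (measure_ne_top _ _), mul_one]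
end
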